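/- arXiv:1201.3987 — 5 statements merged into one kernel-verified Lean document; each statement's English description precedes it below -/
import Mathlib

section
/- If R is any broad relation on a set A, then the quotient of the reflexive-transitive closure of R by the equivalence relation identifying mutually related elements is a broad poset. -/
/-- A (commutative) broad poset: a set `A` with a relation between the free
commutative monoid on `A` (modelled as `Multiset A`) and `A`, satisfying
broad reflexivity, transitivity and antisymmetry. -/
structure BroadPoset (A : Type) where
  le : Multiset A → A → Prop
  le_refl : ∀ a : A, le {a} a
  le_trans : ∀ (a : A) (l : List (Multiset A × A)),
      le (↑(l.map Prod.snd) : Multiset A) a → (∀ p ∈ l, le p.1 p.2) →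
      le (l.map Prod.fst).sum a
  le_antisymm : ∀ a a' : A, le {a} a' → le {a'} a → a = a'

/-- The descendance relation: `b ≤_d a` iff `b` occurs in some `b' ≤ a`. -/
def BroadPoset.descLe {A : Type} (P : BroadPoset A) (b a : A) : Prop :=
  ∃ b' : Multiset A, P.le b' a ∧ b ∈ b'

/-- Strict broad inequality `b < a`. -/
def BroadPoset.blt {A : Type} (P : BroadPoset A) (b : Multiset A) (a : A) : Prop :=
  P.le b a ∧ b ≠ {a}

/-- The induced order on `A⁺`: `s ≤ t` iff `t = t₁·…·tₙ` and `s = s₁·…·sₙ`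
with `sᵢ ≤ tᵢ` for each `i`. -/
def BroadPoset.multLe {A : Type} (P : BroadPoset A) (s t : Multiset A) : Prop :=
  ∃ l : List (Multiset A × A), (↑(l.map Prod.snd) : Multiset A) = t ∧
    (l.map Prod.fst).sum = s ∧ ∀ p ∈ l, P.le p.1 p.2

/-- A leaf: an element with `ĥa = ∅`. -/
def BroadPoset.IsLeaf {A : Type} (P : BroadPoset A) (a : A) : Prop :=
  ∀ b : Multiset A, ¬ P.blt b a

/-- `u` is the maximum of `ĥa = {b | b < a}`, i.e. `u = a↑`; its members are
the children of `a`. -/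
def BroadPoset.IsChildSet {A : Type} (P : BroadPoset A) (a : A) (u : Multiset A) : Prop :=
  P.blt u a ∧ ∀ b : Multiset A, P.blt b a → P.multLe b u

/-- `r` is the root: every element is a descendant of `r` (extremum of `≤_d`). -/
def BroadPoset.IsRoot {A : Type} (P : BroadPoset A) (r : A) : Prop :=
  ∀ a : A, P.descLe a r

/-- Monotone functions between broad posets. -/
def IsMonotone {A B : Type} (P : BroadPoset A) (Q : BroadPoset B) (f : A → B) : Prop :=
  ∀ (b : Multiset A) (a : A), P.le b a → Q.le (b.map f) (f a)

/-- A link: `b < a` such that `b ≤ b' < a` implies `b = b'`. -/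
def BroadPoset.IsLink {A : Type} (P : BroadPoset A) (b : Multiset A) (a : A) : Prop :=
  P.blt b a ∧ ∀ b' : Multiset A, P.multLe b b' → P.blt b' a → b = b'

/-- A dendroidally ordered set: a finite broad poset which is simple, has a
root, and in which every non-leaf has children. -/
structure BroadPoset.IsDendroidal {A : Type} (P : BroadPoset A) : Prop where
  finite : Set.Finite {p : Multiset A × A | P.le p.1 p.2}
  simple : ∀ (b : Multiset A) (a : A), P.le b a → b.Nodup
  root : ∃ r : A, P.IsRoot r
  children : ∀ a : A, ¬ P.IsLeaf a → ∃ u : Multiset A, P.IsChildSet a u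

/-- A broad relation is transitive. -/
def IsTransRel {A : Type} (S : Multiset A → A → Prop) : Prop :=
  ∀ (a : A) (l : List (Multiset A × A)),
    S (↑(l.map Prod.snd) : Multiset A) a → (∀ p ∈ l, S p.1 p.2) →
    S (l.map Prod.fst).sum a

/-- The reflexive-transitive closure of a broad relation `R`: the intersection
of all reflexive transitive broad relations containing `R`. -/
def rtClosure {A : Type} (R : Multiset A → A → Prop) : Multiset A → A → Prop :=
  fun b a => ∀ S : Multiset A → A → Prop,
    (∀ b' a', R b' a' → S b' a') → (∀ x : A, S {x} x) → IsTransRel S → S b a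

/-- `a ∼ b` iff `a` and `b` are mutually related by the closure. -/
def mutRel {A : Type} (R : Multiset A → A → Prop) (a b : A) : Prop :=
  rtClosure R {a} b ∧ rtClosure R {b} a

/-- The relation descended to the quotient `A/∼`. -/
def quotLe {A : Type} (R : Multiset A → A → Prop) :
    Multiset (Quot (mutRel R)) → Quot (mutRel R) → Prop :=
  fun b a => ∃ (b' : Multiset A) (a' : A),
    b'.map (Quot.mk (mutRel R)) = b ∧ Quot.mk (mutRel R) a' = a ∧ rtClosure R b' a'


/-!
A reflexive transitive broad relation `S` is compatible with `a ∼ b :↔ S {a} b ∧ S {b} a`: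
composing with the singleton relations `S {x} y` shows that `S b a` depends only on the
classes of `b` and `a`. Hence `S` descends to a reflexive transitive relation on `A/∼`, which
is antisymmetric because `∼` identifies exactly the mutually related elements.
-/

theorem rtClosure_refl {A : Type} (R : Multiset A → A → Prop) (x : A) : rtClosure R {x} x :=
  fun _ _ hrefl _ => hrefl x

theorem isTransRel_rtClosure {A : Type} (R : Multiset A → A → Prop) :
    IsTransRel (rtClosure R) :=
  fun a l ha hl S hR hrefl htrans =>
    htrans a l (ha S hR hrefl htrans) fun p hp => hl p hp S hR hrefl htrans

section
variable {A : Type} {S : Multiset A → A → Prop}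

theorem IsTransRel.trans_singleton (hS : IsTransRel S) {b : Multiset A} {a c : A}
    (hba : S b a) (hac : S {a} c) : S b c := by
  simpa using hS c [(b, a)] (by simpa using hac) (by simpa using hba)

theorem exists_list_of_rel_singleton {c b : Multiset A}
    (h : Multiset.Rel (fun x y => S {x} y) c b) :
    ∃ l : List (Multiset A × A), (↑(l.map Prod.snd) : Multiset A) = b ∧
      (l.map Prod.fst).sum = c ∧ ∀ p ∈ l, S p.1 p.2 := by
  induction h with
  | zero => exact ⟨[], rfl, rfl, by simp⟩
  | @cons x y c b hxy _ ih =>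
    obtain ⟨l, rfl, rfl, hl⟩ := ih
    refine ⟨({x}, y) :: l, rfl, by simp [Multiset.singleton_add], ?_⟩
    exact List.forall_mem_cons.mpr ⟨hxy, hl⟩

theorem IsTransRel.of_rel_singleton (hS : IsTransRel S) {c b : Multiset A} {a : A}
    (hcb : Multiset.Rel (fun x y => S {x} y) c b) (hba : S b a) : S c a := by
  obtain ⟨l, rfl, rfl, hl⟩ := exists_list_of_rel_singleton hcb
  exact hS a l hba hl

end

section
variable {A : Type} (S : Multiset A → A → Prop)

def broadEquiv (a b : A) : Prop :=
  S {a} b ∧ S {b} a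

def broadQuotLe : Multiset (Quot (broadEquiv S)) → Quot (broadEquiv S) → Prop :=
  fun b a => ∃ (b' : Multiset A) (a' : A),
    b'.map (Quot.mk _) = b ∧ Quot.mk _ a' = a ∧ S b' a'

variable {S}

theorem exists_lift_of_forall_broadQuotLe
    {l : List (Multiset (Quot (broadEquiv S)) × Quot (broadEquiv S))}
    (hl : ∀ p ∈ l, broadQuotLe S p.1 p.2) :
    ∃ lA : List (Multiset A × A), (∀ p ∈ lA, S p.1 p.2) ∧
      (↑(l.map Prod.snd) : Multiset (Quot (broadEquiv S))) =
        (↑(lA.map Prod.snd) : Multiset A).map (Quot.mk _) ∧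
      (l.map Prod.fst).sum = (lA.map Prod.fst).sum.map (Quot.mk _) := by
  induction l with
  | nil => exact ⟨[], by simp, rfl, rfl⟩
  | cons p l ih =>
    obtain ⟨lA, hlA, hsnd, hfst⟩ := ih fun q hq => hl q (List.mem_cons_of_mem _ hq)
    obtain ⟨b, a, hb, ha, hba⟩ := hl p List.mem_cons_self
    refine ⟨(b, a) :: lA, List.forall_mem_cons.mpr ⟨hba, hlA⟩, ?_, ?_⟩
    · simpa [ha] using hsnd
    · simp [hfst, hb]

theorem equivalence_broadEquiv (hrefl : ∀ x, S {x} x) (hS : IsTransRel S) :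
    Equivalence (broadEquiv S) where
  refl x := ⟨hrefl x, hrefl x⟩
  symm h := ⟨h.2, h.1⟩
  trans h₁ h₂ := ⟨hS.trans_singleton h₁.1 h₂.1, hS.trans_singleton h₂.2 h₁.2⟩

theorem quot_mk_broadEquiv_eq_iff (hrefl : ∀ x, S {x} x) (hS : IsTransRel S) {a b : A} :
    Quot.mk (broadEquiv S) a = Quot.mk _ b ↔ broadEquiv S a b :=
  Quot.eq.trans (equivalence_broadEquiv hrefl hS).eqvGen_iff

theorem rel_broadEquiv_of_map_mk_eq (hrefl : ∀ x, S {x} x) (hS : IsTransRel S)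
    {s t : Multiset A} (h : s.map (Quot.mk (broadEquiv S)) = t.map (Quot.mk _)) :
    Multiset.Rel (broadEquiv S) s t :=
  (Multiset.rel_map.mp (Multiset.rel_eq.mpr h)).mono fun _ _ _ _ =>
    (quot_mk_broadEquiv_eq_iff hrefl hS).mp

theorem broadQuotLe_mk_iff (hrefl : ∀ x, S {x} x) (hS : IsTransRel S)
    {b : Multiset A} {a : A} :
    broadQuotLe S (b.map (Quot.mk _)) (Quot.mk _ a) ↔ S b a := by
  refine ⟨?_, fun h => ⟨b, a, rfl, rfl, h⟩⟩
  rintro ⟨b', a', hb', ha', hb'a'⟩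
  have hbb' : Multiset.Rel (fun x y => S {x} y) b b' :=
    (rel_broadEquiv_of_map_mk_eq hrefl hS hb'.symm).mono fun _ _ _ _ e => e.1
  exact hS.trans_singleton (hS.of_rel_singleton hbb' hb'a')
    ((quot_mk_broadEquiv_eq_iff hrefl hS).mp ha').1

def BroadPoset.quotient (hrefl : ∀ x, S {x} x) (hS : IsTransRel S) :
    BroadPoset (Quot (broadEquiv S)) where
  le := broadQuotLe S
  le_refl := Quot.ind fun x => (broadQuotLe_mk_iff hrefl hS).mpr (hrefl x)
  le_trans a l hla hl := by
    obtain ⟨lA, hlA, hsnd, hfst⟩ := exists_lift_of_forall_broadQuotLe hl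
    induction a using Quot.ind with | mk a => ?_
    rw [hsnd, broadQuotLe_mk_iff hrefl hS] at hla
    rw [hfst, broadQuotLe_mk_iff hrefl hS]
    exact hS a lA hla hlA
  le_antisymm := by
    rintro ⟨x⟩ ⟨y⟩ hxy hyx
    exact Quot.sound
      ⟨(broadQuotLe_mk_iff hrefl hS).mp hxy, (broadQuotLe_mk_iff hrefl hS).mp hyx⟩

end

/-- The quotient of the reflexive-transitive closure of any broad relation by
the mutual-relatedness equivalence is a broad poset. -/
theorem quotient_rtClosure_isBroadPoset {A : Type} (R : Multiset A → A → Prop) :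
    ∃ P : BroadPoset (Quot (mutRel R)), P.le = quotLe R :=
  ⟨BroadPoset.quotient (rtClosure_refl R) (isTransRel_rtClosure R), rfl⟩
end

section
/- Every finite broad poset is stratified, i.e., the descendance preorder ≤_d is antisymmetric (a partial order). -/
lemma sum_map_singleton_list {A : Type} : ∀ l : List A,
    (l.map (fun c => ({c} : Multiset A))).sum = ↑l := by
  intro l
  induction l with
  | nil => simp
  | cons c l ih => simp [ih, Multiset.singleton_add]

lemma BroadPoset.le_subst {A : Type} [DecidableEq A] (P : BroadPoset A) {s t : Multiset A} {a b : A}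
    (hs : P.le s a) (ht : P.le t b) (ha : a ∈ t) :
    P.le (s + t.erase a) b := by
  have key := P.le_trans b ((s, a) :: (t.erase a).toList.map (fun c => (({c} : Multiset A), c)))
  simp only [List.map_cons, List.map_map, List.sum_cons] at key
  have hsnd : (Prod.snd ∘ fun c : A => (({c} : Multiset A), c)) = id := rfl
  have hfst : (Prod.fst ∘ fun c : A => (({c} : Multiset A), c)) = fun c => ({c} : Multiset A) := rfl
  rw [hsnd, hfst, List.map_id] at key
  have h1 : (↑(a :: (t.erase a).toList) : Multiset A) = t := by
    rw [← Multiset.cons_coe, Multiset.coe_toList, Multiset.cons_erase ha]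
  rw [h1, sum_map_singleton_list, Multiset.coe_toList] at key
  apply key ht
  rintro p hp
  rw [List.mem_cons] at hp
  rcases hp with rfl | hp
  · exact hs
  · simp only [List.mem_map] at hp
    obtain ⟨c, _, rfl⟩ := hp
    exact P.le_refl c

/-- Every finite broad poset is stratified: the descendance preorder `≤_d`
is antisymmetric. -/
theorem finite_broadPoset_stratified {A : Type} (P : BroadPoset A)
    (hfin : Set.Finite {p : Multiset A × A | P.le p.1 p.2}) :
    ∀ a b : A, P.descLe a b → P.descLe b a → a = b := by
  classical
  rintro a b ⟨b', hb'le, hab'⟩ ⟨a', ha'le, hba'⟩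
  by_cases hc : Multiset.card a' + Multiset.card b' ≤ 2
  · have h1 : 0 < Multiset.card a' := Multiset.card_pos_iff_exists_mem.mpr ⟨b, hba'⟩
    have h2 : 0 < Multiset.card b' := Multiset.card_pos_iff_exists_mem.mpr ⟨a, hab'⟩
    have ha1 : Multiset.card a' = 1 := by omega
    have hb1 : Multiset.card b' = 1 := by omega
    obtain ⟨x, rfl⟩ := Multiset.card_eq_one.mp ha1
    obtain ⟨y, rfl⟩ := Multiset.card_eq_one.mp hb1
    rw [Multiset.mem_singleton] at hba' hab'
    subst hba'; subst hab'
    exact P.le_antisymm a b hb'le ha'le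
  · push_neg at hc
    set g : ℕ → Multiset A := fun n => Nat.rec b' (fun _ s => b' + ((a' + s.erase a).erase b)) n with hg
    have hstep : ∀ n, g (n+1) = b' + ((a' + (g n).erase a).erase b) := fun n => rfl
    have h1 : 0 < Multiset.card a' := Multiset.card_pos_iff_exists_mem.mpr ⟨b, hba'⟩
    have h2 : 0 < Multiset.card b' := Multiset.card_pos_iff_exists_mem.mpr ⟨a, hab'⟩
    have key : ∀ n, P.le (g n) b ∧ a ∈ g n ∧ Multiset.card (g n) < Multiset.card (g (n+1)) := by
      intro n
      induction n with
      | zero =>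
        refine ⟨hb'le, hab', ?_⟩
        rw [hstep]
        have hbt : b ∈ a' + (g 0).erase a := Multiset.mem_add.mpr (Or.inl hba')
        have hat : a ∈ g 0 := hab'
        have h0 : 0 < Multiset.card (g 0) := Multiset.card_pos_iff_exists_mem.mpr ⟨a, hat⟩
        simp only [Multiset.card_add, Multiset.card_erase_of_mem hbt,
          Multiset.card_erase_of_mem hat, Multiset.card_add, Nat.pred_eq_sub_one]
        omega
      | succ n ih =>
        obtain ⟨hle, ham, hcard⟩ := ih
        have ht : P.le (a' + (g n).erase a) b := P.le_subst ha'le hle ham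
        have hbt : b ∈ a' + (g n).erase a := Multiset.mem_add.mpr (Or.inl hba')
        have hle' : P.le (g (n+1)) b := by rw [hstep]; exact P.le_subst hb'le ht hbt
        have ham' : a ∈ g (n+1) := by rw [hstep]; exact Multiset.mem_add.mpr (Or.inl hab')
        refine ⟨hle', ham', ?_⟩
        rw [hstep (n+1)]
        have hbt' : b ∈ a' + (g (n+1)).erase a := Multiset.mem_add.mpr (Or.inl hba')
        have h0 : 0 < Multiset.card (g (n+1)) := Multiset.card_pos_iff_exists_mem.mpr ⟨a, ham'⟩
        simp only [Multiset.card_add, Multiset.card_erase_of_mem hbt',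
          Multiset.card_erase_of_mem ham', Multiset.card_add, Nat.pred_eq_sub_one]
        omega
    have hmono : StrictMono (fun n => Multiset.card (g n)) :=
      strictMono_nat_of_lt_succ (fun n => (key n).2.2)
    have hginj : Function.Injective g := fun m n h => hmono.injective (by simp [h])
    have hSfin : Set.Finite {s : Multiset A | P.le s b} := by
      have heq : {s : Multiset A | P.le s b} =
          (fun s : Multiset A => (s, b)) ⁻¹' {p : Multiset A × A | P.le p.1 p.2} := rfl
    
      rw [heq]
      exact Set.Finite.preimage (fun x _ y _ h => congrArg Prod.fst h) hfin
    exact ((Set.infinite_of_injective_forall_mem hginj (fun n => (key n).1)) hSfin).elim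
end

section
/- In a dendroidally ordered set A, if a <_d b then there is a unique child t ∈ b↑ with a ≤_d t. -/
namespace BroadPoset

variable {A : Type} (P : BroadPoset A)

def IsSimple : Prop :=
  ∀ (b : Multiset A) (a : A), P.le b a → b.Nodup

variable {P}

theorem IsDendroidal.isSimple (hP : P.IsDendroidal) : P.IsSimple :=
  hP.simple

theorem multLe_singleton_of_le {s : Multiset A} {a : A} (h : P.le s a) : P.multLe s {a} :=
  ⟨[(s, a)], rfl, by simp, by simpa using h⟩

theorem multLe_add {s s' t t' : Multiset A} (h : P.multLe s t) (h' : P.multLe s' t') :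
    P.multLe (s + s') (t + t') := by
  obtain ⟨l, rfl, rfl, hl⟩ := h
  obtain ⟨l', rfl, rfl, hl'⟩ := h'
  refine ⟨l ++ l', by simp, by simp, fun p hp => ?_⟩
  rcases List.mem_append.mp hp with hp | hp
  exacts [hl p hp, hl' p hp]

theorem multLe_refl (s : Multiset A) : P.multLe s s := by
  induction s using Multiset.induction_on with
  | empty => exact ⟨[], rfl, rfl, by simp⟩
  | cons a s ih =>
    rw [← Multiset.singleton_add]
    exact multLe_add (multLe_singleton_of_le (P.le_refl a)) ih

theorem le_of_multLe_of_le {s t : Multiset A} {a : A} (h : P.multLe s t) (ht : P.le t a) :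
    P.le s a := by
  obtain ⟨l, rfl, rfl, hl⟩ := h
  exact P.le_trans a l ht hl

theorem exists_mem_descLe_of_multLe {s t : Multiset A} {a : A} (h : P.multLe s t)
    (ha : a ∈ s) : ∃ x ∈ t, P.descLe a x := by
  obtain ⟨l, rfl, rfl, hl⟩ := h
  rw [← Multiset.sum_coe] at ha
  obtain ⟨_, hs, has⟩ := Multiset.mem_join.mp ha
  obtain ⟨p, hp, rfl⟩ := List.mem_map.mp (Multiset.mem_coe.mp hs)
  exact ⟨p.2, Multiset.mem_coe.mpr (List.mem_map_of_mem hp), p.1, hl p hp, has⟩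

theorem exists_blt_of_descLe_of_ne {a b : A} (hab : P.descLe a b) (hne : a ≠ b) :
    ∃ b', P.blt b' b ∧ a ∈ b' := by
  obtain ⟨b', hle, ha⟩ := hab
  refine ⟨b', ⟨hle, ?_⟩, ha⟩
  rintro rfl
  exact hne (Multiset.mem_singleton.mp ha)

/-- Replacing two distinct members `t, y` of `u ≤ b` by their predecessors `s ≤ t`, `s' ≤ y`
gives `s + s' + ⋯ ≤ b`, so by simplicity `s` and `s'` cannot share an element. -/
theorem IsSimple.eq_of_descLe_of_descLe (hP : P.IsSimple) {u : Multiset A} {a b t y : A}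
    (hu : P.le u b) (ht : t ∈ u) (hy : y ∈ u) (hat : P.descLe a t) (hay : P.descLe a y) :
    t = y := by
  by_contra hty
  obtain ⟨s, hst, has⟩ := hat
  obtain ⟨s', hsy, has'⟩ := hay
  obtain ⟨u', rfl⟩ := Multiset.exists_cons_of_mem ht
  obtain ⟨r, rfl⟩ := Multiset.exists_cons_of_mem
    ((Multiset.mem_cons.mp hy).resolve_left (Ne.symm hty))
  have hmult : P.multLe (s + (s' + r)) (t ::ₘ y ::ₘ r) := by
    simp only [← Multiset.singleton_add]
    exact multLe_add (multLe_singleton_of_le hst)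
      (multLe_add (multLe_singleton_of_le hsy) (multLe_refl r))
  have hdisj := (Multiset.nodup_add.mp (hP _ b (le_of_multLe_of_le hmult hu))).2.2
  exact Multiset.disjoint_left.mp hdisj has (Multiset.mem_add.mpr (Or.inl has'))

end BroadPoset

/-- In a dendroidally ordered set, if `a <_d b` then there is a unique child
`t ∈ b↑` with `a ≤_d t`. -/
theorem unique_child_above {A : Type} (P : BroadPoset A) (hP : P.IsDendroidal)
    (a b : A) (hab : P.descLe a b) (hne : a ≠ b)
    (u : Multiset A) (hu : P.IsChildSet b u) :
    ∃! t : A, t ∈ u ∧ P.descLe a t := by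
  obtain ⟨b', hb', hab'⟩ := P.exists_blt_of_descLe_of_ne hab hne
  obtain ⟨t, htu, hat⟩ := P.exists_mem_descLe_of_multLe (hu.2 b' hb') hab'
  exact ⟨t, ⟨htu, hat⟩, fun y ⟨hyu, hay⟩ =>
    (hP.isSimple.eq_of_descLe_of_descLe hu.1.1 htu hyu hat hay).symm⟩
end

section
/- In a dendroidally ordered set A, the descendance poset (A, ≤_d) has all binary joins. -/
namespace BroadPoset
variable {A : Type} {P : BroadPoset A}

lemma listSingletonSum (l : List A) :
    (l.map fun x => ({x} : Multiset A)).sum = ↑l := by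
  induction l with
  | nil => simp
  | cons a l ih => simp [ih]

lemma mem_listSum {L : List (Multiset A)} {x : A} (h : x ∈ L.sum) : ∃ s ∈ L, x ∈ s := by
  induction L with
  | nil => simp at h
  | cons a L ih =>
    rw [List.sum_cons] at h
    rcases Multiset.mem_add.mp h with h | h
    · exact ⟨a, by simp, h⟩
    · obtain ⟨s, hs, hx⟩ := ih h
      exact ⟨s, by simp [hs], hx⟩

lemma comp1 {m n : Multiset A} {b a : A} (h1 : P.le m b) (h2 : P.le (b ::ₘ n) a) :
    P.le (m + n) a := by
  have key := P.le_trans a ((m, b) :: n.toList.map fun x => (({x} : Multiset A), x)) ?_ ?_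
  · have : ((((m, b) :: n.toList.map fun x => (({x} : Multiset A), x)).map Prod.fst).sum)
        = m + n := by
      simp [List.map_map, Function.comp_def, listSingletonSum]
    rwa [this] at key
  · have : ((((m, b) :: n.toList.map fun x => (({x} : Multiset A), x)).map Prod.snd) : List A)
        = b :: n.toList := by simp [List.map_map, Function.comp_def]
    rw [this]
    have : ((b :: n.toList : List A) : Multiset A) = b ::ₘ n := by rw [← Multiset.cons_coe, Multiset.coe_toList]
    rwa [this]
  · rintro p hp
    rcases List.mem_cons.mp hp with rfl | hp
    · exact h1
    · obtain ⟨x, _, rfl⟩ := List.mem_map.mp hp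
      exact P.le_refl x

lemma descLe_refl (a : A) : P.descLe a a := ⟨{a}, P.le_refl a, by simp⟩

lemma descLe_trans {x b a : A} (h1 : P.descLe x b) (h2 : P.descLe b a) : P.descLe x a := by
  obtain ⟨m, hm, hx⟩ := h1
  obtain ⟨n, hn, hb⟩ := h2
  obtain ⟨n', rfl⟩ := Multiset.exists_cons_of_mem hb
  exact ⟨m + n', comp1 hm hn, Multiset.mem_add.mpr (Or.inl hx)⟩

/-- If `z` occurs in a multiset `m ≤ z`, then `m = {z}`. -/
lemma eq_singleton_of_self_mem (hP : P.IsDendroidal) {m : Multiset A} {z : A}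
    (h : P.le m z) (hz : z ∈ m) : m = {z} := by
  classical
  obtain ⟨rest, rfl⟩ := Multiset.exists_cons_of_mem hz
  rcases eq_or_ne rest 0 with rfl | hne
  · rfl
  · exfalso
    obtain ⟨x, hx⟩ := Multiset.exists_mem_of_ne_zero hne
    have h2 : P.le ((z ::ₘ rest) + rest) z := comp1 h h
    have hnd := hP.simple _ _ h2
    have hcount := Multiset.nodup_iff_count_le_one.mp hnd x
    have c1 : 1 ≤ Multiset.count x rest := Multiset.one_le_count_iff_mem.mpr hx
    rw [Multiset.count_add, Multiset.count_cons] at hcount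
    omega

lemma descLe_antisymm (hP : P.IsDendroidal) {x y : A}
    (h1 : P.descLe x y) (h2 : P.descLe y x) : x = y := by
  obtain ⟨m, hm, hx⟩ := h1
  obtain ⟨n, hn, hy⟩ := h2
  obtain ⟨n', rfl⟩ := Multiset.exists_cons_of_mem hy
  have h3 : P.le (m + n') x := comp1 hm hn
  have h4 : m + n' = {x} :=
    eq_singleton_of_self_mem hP h3 (Multiset.mem_add.mpr (Or.inl hx))
  have hcard : Multiset.card m + Multiset.card n' = 1 := by
    have := congrArg Multiset.card h4; simpa using this
  have hm1 : 0 < Multiset.card m := Multiset.card_pos.mpr (by rintro rfl; simp at hx)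
  have hn0 : n' = 0 := by
    rw [← Multiset.card_eq_zero]; omega
  subst hn0
  rw [add_zero] at h4
  subst h4
  exact P.le_antisymm x y hm hn

/-- Two distinct members of a multiset `≤ z` have no common descendant. -/
lemma disjoint_children (hP : P.IsDendroidal) {z : A} {u : Multiset A} (hu : P.le u z)
    {c e x : A} (hc : c ∈ u) (he : e ∈ u) (hne : c ≠ e)
    (hxc : P.descLe x c) (hxe : P.descLe x e) : False := by
  classical
  obtain ⟨m, hm, hxm⟩ := hxc
  obtain ⟨m', hm', hxm'⟩ := hxe
  obtain ⟨u₁, rfl⟩ := Multiset.exists_cons_of_mem hc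
  have he₁ : e ∈ u₁ := by
    rcases Multiset.mem_cons.mp he with h | h
    · exact absurd h.symm hne
    · exact h
  obtain ⟨u₂, rfl⟩ := Multiset.exists_cons_of_mem he₁
  have h1 : P.le (m + (e ::ₘ u₂)) z := comp1 hm hu
  have h1' : P.le (e ::ₘ (m + u₂)) z := by
    rwa [show m + (e ::ₘ u₂) = e ::ₘ (m + u₂) by rw [Multiset.add_cons]] at h1
  have h2 : P.le (m' + (m + u₂)) z := comp1 hm' h1'
  have hnd := hP.simple _ _ h2
  have hcount := Multiset.nodup_iff_count_le_one.mp hnd x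
  have c1 : 1 ≤ Multiset.count x m := Multiset.one_le_count_iff_mem.mpr hxm
  have c2 : 1 ≤ Multiset.count x m' := Multiset.one_le_count_iff_mem.mpr hxm'
  rw [Multiset.count_add, Multiset.count_add] at hcount
  omega
lemma exists_childset (hP : P.IsDendroidal) {x z : A} (hxz : P.descLe x z) (hne : x ≠ z) :
    ∃ u, P.IsChildSet z u := by
  obtain ⟨m, hm, hx⟩ := hxz
  have hmne : m ≠ {z} := by rintro rfl; simp at hx; exact hne hx
  exact hP.children z (fun h => h m ⟨hm, hmne⟩)

lemma child_step {x z : A} {u : Multiset A} (hu : P.IsChildSet z u)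
    (hxz : P.descLe x z) (hne : x ≠ z) : ∃ c ∈ u, P.descLe x c := by
  obtain ⟨m, hm, hx⟩ := hxz
  have hmne : m ≠ {z} := by rintro rfl; simp at hx; exact hne hx
  obtain ⟨l, hsnd, hfst, hle⟩ := hu.2 m ⟨hm, hmne⟩
  obtain ⟨s, hs, hxs⟩ := mem_listSum (x := x) (L := l.map Prod.fst) (by rw [hfst]; exact hx)
  obtain ⟨p, hp, rfl⟩ := List.mem_map.mp hs
  refine ⟨p.2, ?_, ⟨p.1, hle p hp, hxs⟩⟩
  rw [← hsnd]
  exact Multiset.mem_coe.mpr (List.mem_map.mpr ⟨p, hp, rfl⟩)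

lemma mem_childset_descLe {z c : A} {u : Multiset A} (hu : P.IsChildSet z u)
    (hc : c ∈ u) : P.descLe c z := ⟨u, hu.1.1, hc⟩

lemma mem_childset_ne (hP : P.IsDendroidal) {z c : A} {u : Multiset A}
    (hu : P.IsChildSet z u) (hc : c ∈ u) : c ≠ z := by
  rintro rfl
  exact hu.1.2 (eq_singleton_of_self_mem hP hu.1.1 hc)

lemma finite_desc (hP : P.IsDendroidal) (z : A) : {x | P.descLe x z}.Finite := by
  have : {x | P.descLe x z} ⊆
      ⋃ p ∈ {p : Multiset A × A | P.le p.1 p.2}, {x | x ∈ p.1} := by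
    rintro x ⟨m, hm, hx⟩
    exact Set.mem_biUnion (show (m, z) ∈ _ from hm) hx
  exact Set.Finite.subset (Set.Finite.biUnion hP.finite fun p _ => p.1.finite_toSet) this

/-- The number of descendants, used as an induction measure. -/
noncomputable def mea (P : BroadPoset A) (z : A) : ℕ := {x | P.descLe x z}.ncard

lemma mea_lt (hP : P.IsDendroidal) {x y : A} (h : P.descLe x y) (hne : x ≠ y) :
    P.mea x < P.mea y := by
  apply Set.ncard_lt_ncard _ (finite_desc hP y)
  constructor
  · intro w hw
    exact descLe_trans hw h
  · intro hsub
    exact hne (descLe_antisymm hP h (hsub (descLe_refl y)))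
lemma uniqueParent_aux (hP : P.IsDendroidal) :
    ∀ n : ℕ, ∀ w z z' : A, ∀ u u' : Multiset A, ∀ c : A, P.mea w < n →
      P.descLe z w → P.descLe z' w → P.IsChildSet z u → P.IsChildSet z' u' →
      c ∈ u → c ∈ u' → z = z' := by
  intro n
  induction n with
  | zero => intro w _ _ _ _ _ h; omega
  | succ n ih =>
    intro w z z' u u' c hmea hz hz' hu hu' hc hc'
    have hcz : P.descLe c z := mem_childset_descLe hu hc
    have hcz' : P.descLe c z' := mem_childset_descLe hu' hc'
    have hcnez : c ≠ z := mem_childset_ne hP hu hc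
    have hcnez' : c ≠ z' := mem_childset_ne hP hu' hc'
    -- helper: the case where one of them equals w is absurd
    have absurdCase : ∀ zz zz' : A, ∀ uu uu' : Multiset A,
        P.descLe zz' zz → P.IsChildSet zz uu → P.IsChildSet zz' uu' →
        c ∈ uu → c ∈ uu' → zz' ≠ zz → False := by
      intro zz zz' uu uu' hle huu huu' hcu hcu' hne
      obtain ⟨d, hd, hzd⟩ := child_step huu hle hne
      have hcd : P.descLe c d := descLe_trans (mem_childset_descLe huu' hcu') hzd
      have hdc : d = c := by
        by_contra hdc
        exact disjoint_children hP huu.1.1 hcu hd (fun h => hdc h.symm)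
          (descLe_refl c) hcd
      subst hdc
      have : zz' = d := descLe_antisymm hP hzd (mem_childset_descLe huu' hcu')
      exact mem_childset_ne hP huu' (this ▸ hcu') rfl
    rcases eq_or_ne z w with rfl | hzw
    · rcases eq_or_ne z' z with h | h
      · exact h.symm
      · exact absurd (absurdCase z z' u u' hz' hu hu' hc hc' h) not_false
    · rcases eq_or_ne z' w with rfl | hz'w
      · exact absurd (absurdCase z' z u' u hz hu' hu hc' hc hzw) not_false
      · obtain ⟨d, hd, hzd⟩ := child_step (P := P) (exists_childset hP hz hzw).choose_spec hz hzw
        set v := (exists_childset hP hz hzw).choose with hv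
        have hvw : P.IsChildSet w v := (exists_childset hP hz hzw).choose_spec
        obtain ⟨d', hd', hz'd'⟩ := child_step hvw hz' hz'w
        have hdd' : d = d' := by
          by_contra hne
          exact disjoint_children hP hvw.1.1 hd hd' hne
            (descLe_trans hcz hzd) (descLe_trans hcz' hz'd')
        subst hdd'
        have hdw : P.mea d < P.mea w :=
          mea_lt hP (mem_childset_descLe hvw hd) (mem_childset_ne hP hvw hd)
        exact ih d z z' u u' c (by omega) hzd hz'd' hu hu' hc hc'

lemma uniqueParent (hP : P.IsDendroidal) {z z' c : A} {u u' : Multiset A}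
    (hu : P.IsChildSet z u) (hu' : P.IsChildSet z' u') (hc : c ∈ u) (hc' : c ∈ u') :
    z = z' := by
  obtain ⟨r, hr⟩ := hP.root
  exact uniqueParent_aux hP (P.mea r + 1) r z z' u u' c (by omega) (hr z) (hr z') hu hu' hc hc'

lemma between_aux (hP : P.IsDendroidal) :
    ∀ n : ℕ, ∀ z' z c : A, ∀ u : Multiset A, P.mea z' < n →
      P.IsChildSet z u → c ∈ u → P.descLe c z' →
      P.descLe z z' ∨ P.descLe z' z := by
  intro n
  induction n with
  | zero => intro z' _ _ _ h; omega
  | succ n ih =>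
    intro z' z c u hmea hu hc hcz'
    rcases eq_or_ne c z' with rfl | hne
    · exact Or.inr (mem_childset_descLe hu hc)
    · obtain ⟨u', hu'⟩ := exists_childset hP hcz' hne
      obtain ⟨c'', hc'', hcc''⟩ := child_step hu' hcz' hne
      have hm : P.mea c'' < P.mea z' :=
        mea_lt hP (mem_childset_descLe hu' hc'') (mem_childset_ne hP hu' hc'')
      rcases ih c'' z c u (by omega) hu hc hcc'' with h | h
      · exact Or.inl (descLe_trans h (mem_childset_descLe hu' hc''))
      · rcases eq_or_ne c'' z with rfl | hne'
        · exact Or.inl (mem_childset_descLe hu' hc'')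
        · obtain ⟨e, he, hce⟩ := child_step hu h hne'
          have hec : e = c := by
            by_contra hec
            exact disjoint_children hP hu.1.1 he hc hec
              (descLe_trans hcc'' hce) (descLe_refl c)
          have hce' : P.descLe c'' c := hec ▸ hce
          have hcc : c = c'' := descLe_antisymm hP hcc'' hce'
          rw [← hcc] at hc''
          have hzz : z = z' := uniqueParent hP hu hu' hc hc''
          exact Or.inl (hzz ▸ descLe_refl z)

lemma chain_aux (hP : P.IsDendroidal) :
    ∀ n : ℕ, ∀ z z' x : A, P.mea z < n →
      P.descLe x z → P.descLe x z' → P.descLe z z' ∨ P.descLe z' z := by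
  intro n
  induction n with
  | zero => intro z _ _ h; omega
  | succ n ih =>
    intro z z' x hmea hxz hxz'
    rcases eq_or_ne x z with rfl | hne
    · exact Or.inl hxz'
    · obtain ⟨u, hu⟩ := exists_childset hP hxz hne
      obtain ⟨c, hc, hxc⟩ := child_step hu hxz hne
      have hm : P.mea c < P.mea z :=
        mea_lt hP (mem_childset_descLe hu hc) (mem_childset_ne hP hu hc)
      rcases ih c z' x (by omega) hxc hxz' with h | h
      · exact between_aux hP (P.mea z' + 1) z' z c u (by omega) hu hc h
      · exact Or.inr (descLe_trans h (mem_childset_descLe hu hc))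

lemma descLe_chain (hP : P.IsDendroidal) {z z' x : A}
    (h1 : P.descLe x z) (h2 : P.descLe x z') : P.descLe z z' ∨ P.descLe z' z :=
  chain_aux hP (P.mea z + 1) z z' x (by omega) h1 h2
end BroadPoset

/-- In a dendroidally ordered set, the descendance poset has all binary joins. -/
theorem descLe_binary_joins {A : Type} (P : BroadPoset A) (hP : P.IsDendroidal)
    (a₁ a₂ : A) :
    ∃ j : A, P.descLe a₁ j ∧ P.descLe a₂ j ∧
      ∀ z : A, P.descLe a₁ z → P.descLe a₂ z → P.descLe j z := by
  obtain ⟨r, hr⟩ := hP.root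
  set N : Set ℕ := {n | ∃ z : A, (P.descLe a₁ z ∧ P.descLe a₂ z) ∧ P.mea z = n} with hN
  have hNne : N.Nonempty := ⟨P.mea r, r, ⟨hr a₁, hr a₂⟩, rfl⟩
  obtain ⟨j, ⟨hj₁, hj₂⟩, hjm⟩ := Nat.sInf_mem hNne
  refine ⟨j, hj₁, hj₂, fun z hz₁ hz₂ => ?_⟩
  rcases BroadPoset.descLe_chain hP hj₁ hz₁ with h | h
  · exact h
  · rcases eq_or_ne z j with rfl | hne
    · exact BroadPoset.descLe_refl z
    · exfalso
      have h1 : P.mea z < P.mea j := BroadPoset.mea_lt hP h hne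
      have h2 : sInf N ≤ P.mea z := Nat.sInf_le ⟨z, ⟨hz₁, hz₂⟩, rfl⟩
      omega
end

section
/- In a dendroidally ordered set A with root r, if B ⊆ A is a dendroidally ordered subset that contains the root r, misses a leaf l of A with parent e, and misses only leaves of A, then B misses every child of e. -/
set_option linter.unusedSectionVars false
namespace BPAux

variable {A : Type} [DecidableEq A]

lemma sum_map_singleton (L : List A) :
    (L.map fun z => ({z} : Multiset A)).sum = ↑L := by
  induction L with
  | nil => simp
  | cons a L ih => simp [ih, Multiset.singleton_add]

omit [DecidableEq A] in
lemma mem_sum_fst {x : A} {L : List (Multiset A × A)} :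
    x ∈ (L.map Prod.fst).sum ↔ ∃ p ∈ L, x ∈ p.1 := by
  induction L with
  | nil => simp
  | cons p L ih => simp [ih]

omit [DecidableEq A] in
lemma mem_snds {t : A} {u : Multiset A} {L : List (Multiset A × A)}
    (hs : (↑(L.map Prod.snd) : Multiset A) = u) (ht : t ∈ u) :
    ∃ p ∈ L, p.2 = t := by
  rw [← hs] at ht
  exact List.mem_map.mp (Multiset.mem_coe.mp ht)

omit [DecidableEq A] in
lemma snd_mem {u : Multiset A} {L : List (Multiset A × A)}
    (hs : (↑(L.map Prod.snd) : Multiset A) = u) {p : Multiset A × A} (hp : p ∈ L) :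
    p.2 ∈ u := by
  rw [← hs]
  exact Multiset.mem_coe.mpr (List.mem_map.mpr ⟨p, hp, rfl⟩)

lemma le_refine (P : BroadPoset A) {s m : Multiset A} {e a : A}
    (hs : P.le s e) (he : e ∈ m) (hm : P.le m a) :
    P.le (m.erase e + s) a := by
  have h := P.le_trans a (((m.erase e).toList.map fun z => (({z} : Multiset A), z)) ++ [(s, e)])
    ?_ ?_
  · have hfst : ((((m.erase e).toList.map fun z => (({z} : Multiset A), z)) ++ [(s, e)]).map
        Prod.fst).sum = m.erase e + s := by
      rw [List.map_append, List.map_map, List.sum_append]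
      simp [Function.comp_def, sum_map_singleton]
    rwa [hfst] at h
  · have hsnd : ((((m.erase e).toList.map fun z => (({z} : Multiset A), z)) ++ [(s, e)]).map
        Prod.snd : List A) = (m.erase e).toList ++ [e] := by
      rw [List.map_append, List.map_map]
      simp [Function.comp_def]
    rw [hsnd]
    have h2 : ((((m.erase e).toList ++ [e] : List A)) : Multiset A) = m := by
      rw [← Multiset.coe_add, Multiset.coe_toList, Multiset.coe_singleton, add_comm,
        Multiset.singleton_add, Multiset.cons_erase he]
    rwa [h2]
  · intro p hp
    rcases List.mem_append.mp hp with h1 | h2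
    · rcases List.mem_map.mp h1 with ⟨z, hz, rfl⟩
      exact P.le_refl z
    · simp at h2; subst h2; exact hs

omit [DecidableEq A] in
lemma leSet_finite (P : BroadPoset A) (hP : P.IsDendroidal) (a : A) :
    {m : Multiset A | P.le m a}.Finite :=
  (hP.finite.image Prod.fst).subset (fun m hm => ⟨(m, a), hm, rfl⟩)

/-- The number of multisets lying below `a`. -/
noncomputable def mu (P : BroadPoset A) (a : A) : ℕ :=
  Set.ncard {m : Multiset A | P.le m a}

omit [DecidableEq A] in
lemma nodup_of_le (P : BroadPoset A) (hP : P.IsDendroidal) {m : Multiset A} {a : A}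
    (h : P.le m a) : m.Nodup := hP.simple m a h

/-- No strict self-descent: `a` cannot occur in a multiset strictly below `a`. -/
lemma not_blt_self_mem (P : BroadPoset A) (hP : P.IsDendroidal) {s : Multiset A} {a : A}
    (hb : P.blt s a) (ha : a ∈ s) : False := by
  have hfin : {m : Multiset A | P.le m a}.Finite := leSet_finite P hP a
  haveI := hfin.to_subtype
  let φ : {m : Multiset A | P.le m a} → {m : Multiset A | P.le m a} :=
    fun m => ⟨s.erase a + m.1, le_refine P m.2 ha hb.1⟩
  have hinj : Function.Injective φ := by
    intro m₁ m₂ h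
    have := congrArg Subtype.val h
    exact Subtype.ext (add_left_cancel this)
  obtain ⟨⟨m, hm⟩, hφ⟩ := Finite.injective_iff_surjective.mp hinj ⟨{a}, P.le_refl a⟩
  have heq : s.erase a + m = {a} := congrArg Subtype.val hφ
  have hle : s.erase a ≤ {a} := by rw [← heq]; exact Multiset.le_add_right _ _
  rcases Multiset.le_singleton.mp hle with h0 | h1
  · have hs : s = {a} := by
      have := Multiset.cons_erase ha
      rw [h0] at this
      simpa using this.symm
    exact hb.2 hs
  · have : a ∈ s.erase a := by rw [h1]; exact Multiset.mem_singleton_self a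
    have hnd : s.Nodup := nodup_of_le P hP hb.1
    have hc : Multiset.count a s ≤ 1 := Multiset.nodup_iff_count_le_one.mp hnd a
    have : 0 < Multiset.count a (s.erase a) := Multiset.count_pos.mpr this
    rw [Multiset.count_erase_self] at this
    omega

lemma mu_mono (P : BroadPoset A) (hP : P.IsDendroidal) {x : A} {s : Multiset A} {t : A}
    (hx : x ∈ s) (hst : P.le s t) : mu P x ≤ mu P t := by
  have h1 : (fun m => s.erase x + m) '' {m : Multiset A | P.le m x} ⊆ {m | P.le m t} := by
    rintro - ⟨m', hm', rfl⟩
    exact le_refine P hm' hx hst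
  calc mu P x = Set.ncard ((fun m => s.erase x + m) '' {m : Multiset A | P.le m x}) :=
        (Set.ncard_image_of_injective _ (add_right_injective _)).symm
    _ ≤ mu P t := Set.ncard_le_ncard h1 (leSet_finite P hP t)

lemma mu_strict (P : BroadPoset A) (hP : P.IsDendroidal) {x : A} {s : Multiset A} {t : A}
    (hb : P.blt s t) (hx : x ∈ s) : mu P x < mu P t := by
  have h1 : (fun m => s.erase x + m) '' {m : Multiset A | P.le m x} ⊂ {m | P.le m t} := by
    constructor
    · rintro - ⟨m', hm', rfl⟩
      exact le_refine P hm' hx hb.1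
    · intro hsup
      have hmem : ({t} : Multiset A) ∈ (fun m => s.erase x + m) '' {m : Multiset A | P.le m x} :=
        hsup (P.le_refl t)
      obtain ⟨m, hm, heq⟩ := hmem
      have hle : s.erase x ≤ {t} := by rw [← heq]; exact Multiset.le_add_right _ _
      rcases Multiset.le_singleton.mp hle with h0 | h1
      · have hsx : s = {x} := by
          have := Multiset.cons_erase hx
          rw [h0] at this
          simpa using this.symm
        have hmt : m = {t} := by rw [hsx] at heq; simpa using heq
        have hxt : x = t := P.le_antisymm x t (by rw [← hsx]; exact hb.1) (by rw [← hmt]; exact hm)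
        exact hb.2 (by rw [hsx, hxt])
      · have : t ∈ s := Multiset.mem_of_mem_erase (by rw [h1]; exact Multiset.mem_singleton_self t)
        exact absurd this (fun h => not_blt_self_mem P hP hb h)
  calc mu P x = Set.ncard ((fun m => s.erase x + m) '' {m : Multiset A | P.le m x}) :=
        (Set.ncard_image_of_injective _ (add_right_injective _)).symm
    _ < mu P t := Set.ncard_lt_ncard h1 (leSet_finite P hP t)

end BPAux

namespace BPAux

variable {A : Type} [DecidableEq A]

/-- Two elements occurring below `a` are comparable or share a common cut below `a`. -/
lemma comm_cut (P : BroadPoset A) (hP : P.IsDendroidal) :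
    ∀ n : ℕ, ∀ a : A, mu P a < n → ∀ x y : A, ∀ m₁ m₂ : Multiset A,
      P.le m₁ a → x ∈ m₁ → P.le m₂ a → y ∈ m₂ →
      P.descLe x y ∨ P.descLe y x ∨ ∃ m, P.le m a ∧ x ∈ m ∧ y ∈ m := by
  intro n
  induction n with
  | zero => intro a ha; omega
  | succ n ih =>
    intro a ha x y m₁ m₂ h₁ hx h₂ hy
    by_cases e₁ : m₁ = {a}
    · have hxa : x = a := by rw [e₁] at hx; simpa using hx
      exact Or.inr (Or.inl ⟨m₂, by rw [hxa]; exact h₂, hy⟩)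
    by_cases e₂ : m₂ = {a}
    · have hya : y = a := by rw [e₂] at hy; simpa using hy
      exact Or.inl ⟨m₁, by rw [hya]; exact h₁, hx⟩
    have hb₁ : P.blt m₁ a := ⟨h₁, e₁⟩
    have hb₂ : P.blt m₂ a := ⟨h₂, e₂⟩
    have hnl : ¬ P.IsLeaf a := fun h => h m₁ hb₁
    obtain ⟨w, hw⟩ := hP.children a hnl
    obtain ⟨L₁, hs₁, hf₁, hl₁⟩ := hw.2 m₁ hb₁
    obtain ⟨L₂, hs₂, hf₂, hl₂⟩ := hw.2 m₂ hb₂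
    rw [← hf₁] at hx; obtain ⟨p, hpL, hxp⟩ := mem_sum_fst.mp hx
    rw [← hf₂] at hy; obtain ⟨q, hqL, hyq⟩ := mem_sum_fst.mp hy
    have hpw : p.2 ∈ w := snd_mem hs₁ hpL
    have hqw : q.2 ∈ w := snd_mem hs₂ hqL
    have hmu : ∀ t ∈ w, mu P t < n := fun t ht =>
      lt_of_lt_of_le (mu_strict P hP hw.1 ht) (Nat.lt_succ_iff.mp ha)
    by_cases hpq : q.2 = p.2
    · rcases ih p.2 (hmu _ hpw) x y p.1 q.1 (hl₁ p hpL) hxp (hpq ▸ hl₂ q hqL) hyq with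
        h | h | ⟨m, hm, hxm, hym⟩
      · exact Or.inl h
      · exact Or.inr (Or.inl h)
      · exact Or.inr (Or.inr ⟨w.erase p.2 + m, le_refine P hm hpw hw.1.1,
          Multiset.mem_add.mpr (Or.inr hxm), Multiset.mem_add.mpr (Or.inr hym)⟩)
    · have h1 : P.le (w.erase p.2 + p.1) a := le_refine P (hl₁ p hpL) hpw hw.1.1
      have hq' : q.2 ∈ w.erase p.2 + p.1 :=
        Multiset.mem_add.mpr (Or.inl ((Multiset.mem_erase_of_ne hpq).mpr hqw))
      have h2 : P.le ((w.erase p.2 + p.1).erase q.2 + q.1) a := le_refine P (hl₂ q hqL) hq' h1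
      refine Or.inr (Or.inr ⟨_, h2, ?_, Multiset.mem_add.mpr (Or.inr hyq)⟩)
      refine Multiset.mem_add.mpr (Or.inl ?_)
      by_cases hxq : x = q.2
      · rw [hxq]
        have c1 : 0 < Multiset.count q.2 (w.erase p.2) := Multiset.count_pos.mpr
          ((Multiset.mem_erase_of_ne hpq).mpr hqw)
        have c2 : 0 < Multiset.count q.2 p.1 := Multiset.count_pos.mpr (by rw [← hxq]; exact hxp)
        have hc : 0 < Multiset.count q.2 ((w.erase p.2 + p.1).erase q.2) := by
          rw [Multiset.count_erase_self, Multiset.count_add]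
          omega
        exact Multiset.count_pos.mp hc
      · exact (Multiset.mem_erase_of_ne hxq).mpr (Multiset.mem_add.mpr (Or.inr hxp))

lemma parent_unique_aux (P : BroadPoset A) (hP : P.IsDendroidal) {e a c : A}
    {u w : Multiset A} (hu : P.IsChildSet e u) (hw : P.IsChildSet a w)
    (hcu : c ∈ u) (hcw : c ∈ w) (hea : e ≠ a) (hd : P.descLe e a) : False := by
  obtain ⟨b, hb, heb⟩ := hd
  have hbne : b ≠ {a} := fun h => hea (by rw [h] at heb; simpa using heb)
  obtain ⟨L, hsL, hfL, hlL⟩ := hw.2 b ⟨hb, hbne⟩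
  rw [← hfL] at heb; obtain ⟨p, hpL, hep⟩ := mem_sum_fst.mp heb
  have hpw : p.2 ∈ w := snd_mem hsL hpL
  have hs₂ : P.le (p.1.erase e + u) p.2 := le_refine P hu.1.1 hep (hlL p hpL)
  have hc₂ : c ∈ p.1.erase e + u := Multiset.mem_add.mpr (Or.inr hcu)
  have hct : c ≠ p.2 := by
    have h1 : mu P c < mu P e := mu_strict P hP hu.1 hcu
    have h2 : mu P e ≤ mu P p.2 := mu_mono P hP hep (hlL p hpL)
    intro h; rw [h] at h1; omega
  have hw' : P.le (w.erase p.2 + (p.1.erase e + u)) a := le_refine P hs₂ hpw hw.1.1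
  have hnd : (w.erase p.2 + (p.1.erase e + u)).Nodup := nodup_of_le P hP hw'
  have c1 : 0 < Multiset.count c (w.erase p.2) := Multiset.count_pos.mpr
    ((Multiset.mem_erase_of_ne hct).mpr hcw)
  have c2 : 0 < Multiset.count c (p.1.erase e + u) := Multiset.count_pos.mpr hc₂
  have := Multiset.nodup_iff_count_le_one.mp hnd c
  rw [Multiset.count_add] at this
  omega

/-- Parents are unique: if `c` is a child of both `e` and `a`, then `e = a`. -/
lemma parent_unique (P : BroadPoset A) (hP : P.IsDendroidal) {e a c : A}
    {u w : Multiset A} (hu : P.IsChildSet e u) (hw : P.IsChildSet a w)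
    (hcu : c ∈ u) (hcw : c ∈ w) : e = a := by
  by_contra hea
  obtain ⟨r, hr⟩ := hP.root
  obtain ⟨b₁, hb₁, he₁⟩ := hr e
  obtain ⟨b₂, hb₂, ha₂⟩ := hr a
  rcases comm_cut P hP (mu P r + 1) r (Nat.lt_succ_self _) e a b₁ b₂ hb₁ he₁ hb₂ ha₂ with
    h | h | ⟨m, hm, hem, ham⟩
  · exact parent_unique_aux P hP hu hw hcu hcw hea h
  · exact parent_unique_aux P hP hw hu hcw hcu (Ne.symm hea) h
  · have hca : c ≠ a := by
      intro h; subst h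
      exact not_blt_self_mem P hP hw.1 hcw
    have h₁ : P.le (m.erase e + u) r := le_refine P hu.1.1 hem hm
    have ham₁ : a ∈ m.erase e + u := by
      refine Multiset.mem_add.mpr (Or.inl ((Multiset.mem_erase_of_ne (Ne.symm hea)).mpr ham))
    have h₂ : P.le ((m.erase e + u).erase a + w) r := le_refine P hw.1.1 ham₁ h₁
    have hnd := nodup_of_le P hP h₂
    have c1 : 0 < Multiset.count c ((m.erase e + u).erase a) := Multiset.count_pos.mpr
      ((Multiset.mem_erase_of_ne hca).mpr (Multiset.mem_add.mpr (Or.inr hcu)))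
    have c2 : 0 < Multiset.count c w := Multiset.count_pos.mpr hcw
    have := Multiset.nodup_iff_count_le_one.mp hnd c
    rw [Multiset.count_add] at this
    omega

end BPAux

namespace BPAux

variable {A : Type} [DecidableEq A]

omit [DecidableEq A] in
/-- A leaf child of `e` occurs in every multiset strictly below `e`. -/
lemma leaf_mem_of_blt (P : BroadPoset A) {e l : A} {u b : Multiset A}
    (hl : P.IsLeaf l) (hu : P.IsChildSet e u) (hlu : l ∈ u) (hb : P.blt b e) : l ∈ b := by
  obtain ⟨L, hsL, hfL, hlL⟩ := hu.2 b hb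
  obtain ⟨p, hpL, hpl⟩ := mem_snds hsL hlu
  have hple : P.le p.1 l := hpl ▸ hlL p hpL
  have hp1 : p.1 = {l} := by
    by_contra h
    exact hl p.1 ⟨hple, h⟩
  have : l ∈ p.1 := by rw [hp1]; exact Multiset.mem_singleton_self l
  rw [← hfL]
  exact mem_sum_fst.mpr ⟨p, hpL, this⟩

/-- Key descent lemma: if `c` is a child of `e` with a leaf sibling `l`,
then any multiset strictly below anything and containing `c` also contains `l`. -/
lemma leaf_sibling_mem (P : BroadPoset A) (hP : P.IsDendroidal) {e l c : A} {u : Multiset A}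
    (hl : P.IsLeaf l) (hu : P.IsChildSet e u) (hlu : l ∈ u) (hcu : c ∈ u) :
    ∀ n : ℕ, ∀ a : A, mu P a < n → ∀ m : Multiset A,
      P.le m a → c ∈ m → c ≠ a → l ∈ m := by
  intro n
  induction n with
  | zero => intro a ha; omega
  | succ n ih =>
    intro a ha m hm hcm hca
    have hmne : m ≠ {a} := fun h => hca (by rw [h] at hcm; simpa using hcm)
    have hbm : P.blt m a := ⟨hm, hmne⟩
    by_cases hee : e = a
    · exact leaf_mem_of_blt P hl hu hlu (hee ▸ hbm)
    · have hnl : ¬ P.IsLeaf a := fun h => h m hbm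
      obtain ⟨w, hw⟩ := hP.children a hnl
      obtain ⟨L, hsL, hfL, hlL⟩ := hw.2 m hbm
      rw [← hfL] at hcm
      obtain ⟨p, hpL, hcp⟩ := mem_sum_fst.mp hcm
      have hpw : p.2 ∈ w := snd_mem hsL hpL
      have hct : c ≠ p.2 := by
        intro h
        exact hee (parent_unique P hP hu hw hcu (h ▸ hpw))
      have hmu : mu P p.2 < n :=
        lt_of_lt_of_le (mu_strict P hP hw.1 hpw) (Nat.lt_succ_iff.mp ha)
      have : l ∈ p.1 := ih p.2 hmu p.1 (hlL p hpL) hcp hct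
      rw [← hfL]
      exact mem_sum_fst.mpr ⟨p, hpL, this⟩

end BPAux

/-- If a dendroidally ordered subset `B ⊆ A` contains the root, misses a leaf
`l` of `A` whose parent is `e`, and misses only leaves of `A`, then `B` misses
every child of `e`. -/
theorem missing_leaf_misses_all_children {A : Type} (P : BroadPoset A)
    (hP : P.IsDendroidal) (S : Set A)
    (Q : BroadPoset {x : A // x ∈ S})
    (hQle : Q.le = fun (s : Multiset {x : A // x ∈ S}) (x : {x : A // x ∈ S}) =>
      P.le (s.map Subtype.val) x.val)
    (hQ : Q.IsDendroidal)
    (r : A) (hr : P.IsRoot r) (hrS : r ∈ S)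
    (l : A) (hl : P.IsLeaf l) (hlS : l ∉ S)
    (e : A) (u : Multiset A) (hu : P.IsChildSet e u) (hlu : l ∈ u)
    (hmiss : ∀ x : A, x ∉ S → P.IsLeaf x) :
    ∀ c ∈ u, c ∉ S := by
  classical
  intro c hcu hcS
  have heS : e ∈ S := by
    by_contra h
    exact hmiss e h u hu.1
  obtain ⟨rQ, hrQ⟩ := hQ.root
  obtain ⟨v, hv, hcv⟩ := hrQ ⟨c, hcS⟩
  rw [hQle] at hv
  have hcvm : c ∈ v.map Subtype.val := Multiset.mem_map.mpr ⟨⟨c, hcS⟩, hcv, rfl⟩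
  by_cases hc : c = rQ.1
  · obtain ⟨v', hv', hev'⟩ := hrQ ⟨e, heS⟩
    rw [hQle] at hv'
    have hevm : e ∈ v'.map Subtype.val := Multiset.mem_map.mpr ⟨⟨e, heS⟩, hev', rfl⟩
    have h1 : BPAux.mu P e ≤ BPAux.mu P rQ.1 := BPAux.mu_mono P hP hevm hv'
    have h2 : BPAux.mu P c < BPAux.mu P e := BPAux.mu_strict P hP hu.1 hcu
    rw [hc] at h2
    omega
  · have hlm := BPAux.leaf_sibling_mem P hP hl hu hlu hcu (BPAux.mu P rQ.1 + 1) rQ.1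
      (Nat.lt_succ_self _) (v.map Subtype.val) hv hcvm hc
    obtain ⟨x, hx, hxl⟩ := Multiset.mem_map.mp hlm
    exact hlS (hxl ▸ x.2)
end
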